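/- The embedded Markov chain of the Schlögl model, with transition probabilities P(x, x+1) = (γ₁ + γ₃x(x−1))/μ(x) and P(x, x−1) = (γ₂x + γ₄x(x−1)(x−2))/μ(x), where μ(x) = γ₁ + γ₂x + γ₃x(x−1) + γ₄x(x−1)(x−2), admits a unique stationary distribution: there exists exactly one probability distribution ρ on ℕ satisfying Σ_x ρ(x)·P(x,y) = ρ(y) for all y ∈ ℕ. -/

import Mathlib

/-- Total propensity of the Schlögl model:
`μ(x) = γ₁ + γ₂x + γ₃x(x−1) + γ₄x(x−1)(x−2)`. -/
noncomputable def schloeglMu (γ₁ γ₂ γ₃ γ₄ : ℝ) (x : ℕ) : ℝ :=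
  γ₁ + γ₂ * x + γ₃ * x * ((x : ℝ) - 1) + γ₄ * x * ((x : ℝ) - 1) * ((x : ℝ) - 2)

/-- Transition probabilities of the embedded Schlögl chain:
`P(x, x+1) = (γ₁+γ₃x(x−1))/μ(x)`, `P(x, x−1) = (γ₂x+γ₄x(x−1)(x−2))/μ(x)`, `0` otherwise. -/
noncomputable def schloeglP (γ₁ γ₂ γ₃ γ₄ : ℝ) (x y : ℕ) : ℝ :=
  if y = x + 1 then (γ₁ + γ₃ * x * ((x : ℝ) - 1)) / schloeglMu γ₁ γ₂ γ₃ γ₄ x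
  else if y + 1 = x then
    (γ₂ * x + γ₄ * x * ((x : ℝ) - 1) * ((x : ℝ) - 2)) / schloeglMu γ₁ γ₂ γ₃ γ₄ x
  else 0

/-!
The embedded Schlögl chain is a birth–death chain on `ℕ` with up-probability `p` and
down-probability `q`, `p + q = 1`, `q 0 = 0`. For such a chain stationarity is equivalent to
detailed balance `ρ(x+1) q(x+1) = ρ(x) p(x)` (induct along the stationarity equations), so every
stationary measure is a multiple of the weights `w(x) = ∏_{k<x} p(k) / q(k+1)`; a stationary
distribution therefore exists, and is unique, as soon as `w` is summable. For the Schlögl chain the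
birth propensity has degree `2` and the total propensity degree `3`, so `p(x) → 0`,
`q(x+1) → 1`, and the ratio test applies.
-/

open Filter Topology Polynomial

namespace BirthDeath

variable (p q : ℕ → ℝ)

-- `q 0` is never used: there is no state below `0`.
def kernel (x y : ℕ) : ℝ :=
  if y = x + 1 then p x else if y + 1 = x then q x else 0

noncomputable def weight : ℕ → ℝ
  | 0 => 1
  | x + 1 => weight x * p x / q (x + 1)

lemma tsum_mul_kernel_zero (ρ : ℕ → ℝ) : ∑' x, ρ x * kernel p q x 0 = ρ 1 * q 1 := by
  rw [tsum_eq_single 1 fun x hx => ?_]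
  · simp [kernel]
  · have h : ¬ 0 + 1 = x := by omega
    simp [kernel, h]

lemma tsum_mul_kernel_succ (ρ : ℕ → ℝ) (k : ℕ) :
    ∑' x, ρ x * kernel p q x (k + 1) = ρ k * p k + ρ (k + 2) * q (k + 2) := by
  rw [tsum_eq_sum (s := {k, k + 2}) fun x hx => ?_, Finset.sum_pair (by omega)]
  · simp [kernel]
  · simp only [Finset.mem_insert, Finset.mem_singleton, not_or] at hx
    have h₁ : k ≠ x := Ne.symm hx.1
    have h₂ : ¬ k + 1 + 1 = x := by omega
    simp [kernel, h₁, h₂]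

variable {p q}

theorem stationary_iff_detailed_balance (hpq : ∀ x, p x + q x = 1) (hq₀ : q 0 = 0)
    (ρ : ℕ → ℝ) :
    (∀ y, ∑' x, ρ x * kernel p q x y = ρ y) ↔ ∀ x, ρ (x + 1) * q (x + 1) = ρ x * p x := by
  constructor
  · intro h x
    induction x with
    | zero =>
      have h₀ := h 0
      rw [tsum_mul_kernel_zero] at h₀
      linear_combination h₀ - ρ 0 * hpq 0 + ρ 0 * hq₀
    | succ k ih =>
      have hk := h (k + 1)
      rw [tsum_mul_kernel_succ] at hk
      linear_combination hk + ih - ρ (k + 1) * hpq (k + 1)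
  · rintro h (_ | k)
    · rw [tsum_mul_kernel_zero]
      linear_combination h 0 + ρ 0 * hpq 0 - ρ 0 * hq₀
    · rw [tsum_mul_kernel_succ]
      linear_combination h (k + 1) - h k + ρ (k + 1) * hpq (k + 1)

lemma weight_pos (hp : ∀ x, 0 < p x) (hq : ∀ x, 0 < q (x + 1)) (x : ℕ) : 0 < weight p q x := by
  induction x with
  | zero => exact one_pos
  | succ k ih => exact div_pos (mul_pos ih (hp k)) (hq k)

lemma weight_detailed_balance (hq : ∀ x, q (x + 1) ≠ 0) (x : ℕ) :
    weight p q (x + 1) * q (x + 1) = weight p q x * p x :=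
  div_mul_cancel₀ _ (hq x)

lemma eq_mul_weight_of_detailed_balance (hq : ∀ x, q (x + 1) ≠ 0) {ρ : ℕ → ℝ}
    (h : ∀ x, ρ (x + 1) * q (x + 1) = ρ x * p x) (x : ℕ) : ρ x = ρ 0 * weight p q x := by
  induction x with
  | zero => simp [weight]
  | succ k ih =>
    rw [weight, ← mul_div_assoc, eq_div_iff (hq k), ← mul_assoc, ← ih, h]

lemma summable_weight (hp : ∀ x, 0 < p x) (hq : ∀ x, 0 < q (x + 1)) {l : ℝ} (hl : l < 1)
    (h : Tendsto (fun x => p x / q (x + 1)) atTop (𝓝 l)) : Summable (weight p q) := by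
  refine summable_of_ratio_test_tendsto_lt_one hl
    (Eventually.of_forall fun x => (weight_pos hp hq x).ne') ?_
  refine h.congr fun x => ?_
  have hw := weight_pos hp hq x
  rw [Real.norm_of_nonneg (weight_pos hp hq (x + 1)).le, Real.norm_of_nonneg hw.le, weight]
  field_simp

theorem existsUnique_stationary (hpq : ∀ x, p x + q x = 1) (hq₀ : q 0 = 0)
    (hp : ∀ x, 0 < p x) (hq : ∀ x, 0 < q (x + 1)) (hsum : Summable (weight p q)) :
    ∃! ρ : ℕ → ℝ, (∀ x, 0 ≤ ρ x ∧ ρ x ≤ 1) ∧ (∑' x, ρ x = 1) ∧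
      (∀ y, ∑' x, ρ x * kernel p q x y = ρ y) := by
  set Z := ∑' x, weight p q x
  have hw := weight_pos hp hq
  have hle (x : ℕ) : weight p q x ≤ Z := hsum.le_tsum x fun y _ => (hw y).le
  have hZ : 0 < Z := (hw 0).trans_le (hle 0)
  refine ⟨fun x => weight p q x / Z, ⟨fun x => ⟨(div_pos (hw x) hZ).le, div_le_one_of_le₀ (hle x) hZ.le⟩,
    by rw [tsum_div_const, div_self hZ.ne'],
    (stationary_iff_detailed_balance hpq hq₀ _).2 fun x => ?_⟩, ?_⟩
  · rw [div_mul_eq_mul_div, weight_detailed_balance (fun x => (hq x).ne')]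
    ring
  · rintro ρ ⟨-, hρ₁, hρ⟩
    have hρw := eq_mul_weight_of_detailed_balance (fun x => (hq x).ne')
      ((stationary_iff_detailed_balance hpq hq₀ ρ).1 hρ)
    have hρ₀ : ρ 0 * Z = 1 := by rw [← hρ₁, ← tsum_mul_left, tsum_congr hρw]
    funext x
    rw [hρw x, eq_div_iff hZ.ne']
    linear_combination weight p q x * hρ₀

end BirthDeath

section Schloegl

noncomputable def schloeglUp (γ₁ γ₂ γ₃ γ₄ : ℝ) (x : ℕ) : ℝ :=
  (γ₁ + γ₃ * x * ((x : ℝ) - 1)) / schloeglMu γ₁ γ₂ γ₃ γ₄ x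

noncomputable def schloeglDown (γ₁ γ₂ γ₃ γ₄ : ℝ) (x : ℕ) : ℝ :=
  (γ₂ * x + γ₄ * x * ((x : ℝ) - 1) * ((x : ℝ) - 2)) / schloeglMu γ₁ γ₂ γ₃ γ₄ x

variable {γ₁ γ₂ γ₃ γ₄ : ℝ}

lemma schloeglP_eq_kernel :
    schloeglP γ₁ γ₂ γ₃ γ₄ =
      BirthDeath.kernel (schloeglUp γ₁ γ₂ γ₃ γ₄) (schloeglDown γ₁ γ₂ γ₃ γ₄) :=
  rfl

lemma natCast_mul_sub_one_nonneg (x : ℕ) : 0 ≤ (x : ℝ) * (x - 1) := by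
  rcases x with _ | x
  · simp
  · push_cast
    ring_nf
    positivity

lemma natCast_mul_sub_one_mul_sub_two_nonneg (x : ℕ) : 0 ≤ (x : ℝ) * (x - 1) * (x - 2) := by
  rcases x with _ | _ | x
  · simp
  · simp
  · push_cast
    ring_nf
    positivity

lemma schloeglUp_numerator_pos (hγ₁ : 0 < γ₁) (hγ₃ : 0 < γ₃) (x : ℕ) :
    0 < γ₁ + γ₃ * x * ((x : ℝ) - 1) := by
  nlinarith [mul_nonneg hγ₃.le (natCast_mul_sub_one_nonneg x)]

lemma schloeglDown_numerator_nonneg (hγ₂ : 0 < γ₂) (hγ₄ : 0 < γ₄) (x : ℕ) :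
    0 ≤ γ₂ * x + γ₄ * x * ((x : ℝ) - 1) * ((x : ℝ) - 2) := by
  nlinarith [mul_nonneg hγ₂.le x.cast_nonneg,
    mul_nonneg hγ₄.le (natCast_mul_sub_one_mul_sub_two_nonneg x)]

lemma schloeglMu_pos (hγ₁ : 0 < γ₁) (hγ₂ : 0 < γ₂) (hγ₃ : 0 < γ₃) (hγ₄ : 0 < γ₄) (x : ℕ) :
    0 < schloeglMu γ₁ γ₂ γ₃ γ₄ x := by
  have := schloeglUp_numerator_pos hγ₁ hγ₃ x
  have := schloeglDown_numerator_nonneg hγ₂ hγ₄ x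
  unfold schloeglMu
  linarith

lemma schloeglUp_pos (hγ₁ : 0 < γ₁) (hγ₂ : 0 < γ₂) (hγ₃ : 0 < γ₃) (hγ₄ : 0 < γ₄) (x : ℕ) :
    0 < schloeglUp γ₁ γ₂ γ₃ γ₄ x :=
  div_pos (schloeglUp_numerator_pos hγ₁ hγ₃ x) (schloeglMu_pos hγ₁ hγ₂ hγ₃ hγ₄ x)

lemma schloeglDown_succ_pos (hγ₁ : 0 < γ₁) (hγ₂ : 0 < γ₂) (hγ₃ : 0 < γ₃) (hγ₄ : 0 < γ₄)
    (x : ℕ) : 0 < schloeglDown γ₁ γ₂ γ₃ γ₄ (x + 1) := by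
  refine div_pos ?_ (schloeglMu_pos hγ₁ hγ₂ hγ₃ hγ₄ _)
  have hx : (0 : ℝ) < ((x + 1 : ℕ) : ℝ) := by positivity
  nlinarith [mul_nonneg hγ₄.le (natCast_mul_sub_one_mul_sub_two_nonneg (x + 1)), mul_pos hγ₂ hx]

lemma schloeglDown_zero : schloeglDown γ₁ γ₂ γ₃ γ₄ 0 = 0 := by
  simp [schloeglDown]

lemma schloeglUp_add_schloeglDown (hγ₁ : 0 < γ₁) (hγ₂ : 0 < γ₂) (hγ₃ : 0 < γ₃) (hγ₄ : 0 < γ₄)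
    (x : ℕ) : schloeglUp γ₁ γ₂ γ₃ γ₄ x + schloeglDown γ₁ γ₂ γ₃ γ₄ x = 1 := by
  rw [schloeglUp, schloeglDown, ← add_div, div_eq_one_iff_eq (schloeglMu_pos hγ₁ hγ₂ hγ₃ hγ₄ x).ne',
    schloeglMu]
  ring

lemma tendsto_schloeglUp (hγ₄ : γ₄ ≠ 0) : Tendsto (schloeglUp γ₁ γ₂ γ₃ γ₄) atTop (𝓝 0) := by
  have hdeg : (C γ₁ + C γ₃ * X * (X - 1) : ℝ[X]).degree <
      (C γ₁ + C γ₂ * X + C γ₃ * X * (X - 1) + C γ₄ * X * (X - 1) * (X - 2) : ℝ[X]).degree :=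
    calc (C γ₁ + C γ₃ * X * (X - 1) : ℝ[X]).degree ≤ 2 := by compute_degree
      _ < 3 := by norm_num
      _ = _ := by symm; compute_degree!
  refine ((div_tendsto_atTop_zero_of_degree_lt _ _ hdeg).comp tendsto_natCast_atTop_atTop).congr
    fun x => ?_
  simp [schloeglUp, schloeglMu]

lemma tendsto_schloeglUp_div_schloeglDown_succ (hγ₁ : 0 < γ₁) (hγ₂ : 0 < γ₂) (hγ₃ : 0 < γ₃)
    (hγ₄ : 0 < γ₄) :
    Tendsto (fun x => schloeglUp γ₁ γ₂ γ₃ γ₄ x / schloeglDown γ₁ γ₂ γ₃ γ₄ (x + 1)) atTop (𝓝 0) := by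
  have hup := tendsto_schloeglUp (γ₁ := γ₁) (γ₂ := γ₂) (γ₃ := γ₃) hγ₄.ne'
  have hdown : Tendsto (fun x => schloeglDown γ₁ γ₂ γ₃ γ₄ (x + 1)) atTop (𝓝 1) := by
    have := tendsto_const_nhds (x := (1 : ℝ)).sub ((tendsto_add_atTop_iff_nat 1).2 hup)
    rw [sub_zero] at this
    refine this.congr fun x => ?_
    rw [← schloeglUp_add_schloeglDown hγ₁ hγ₂ hγ₃ hγ₄ (x + 1), add_sub_cancel_left]
  have := hup.div hdown one_ne_zero
  rwa [zero_div] at this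

end Schloegl

/-- The embedded Markov chain of the Schlögl model admits a unique stationary distribution:
there is exactly one probability distribution `ρ` on `ℕ` satisfying
`Σ_x ρ(x)·P(x,y) = ρ(y)` for all `y`. -/
theorem stmt18 (γ₁ γ₂ γ₃ γ₄ : ℝ)
    (hγ₁ : 0 < γ₁) (hγ₂ : 0 < γ₂) (hγ₃ : 0 < γ₃) (hγ₄ : 0 < γ₄) :
    ∃! ρ : ℕ → ℝ, (∀ x, 0 ≤ ρ x ∧ ρ x ≤ 1) ∧ (∑' x, ρ x = 1) ∧
      (∀ y : ℕ, ∑' x : ℕ, ρ x * schloeglP γ₁ γ₂ γ₃ γ₄ x y = ρ y) := by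
  rw [schloeglP_eq_kernel]
  have hup := schloeglUp_pos hγ₁ hγ₂ hγ₃ hγ₄
  have hdown := schloeglDown_succ_pos hγ₁ hγ₂ hγ₃ hγ₄
  exact BirthDeath.existsUnique_stationary (schloeglUp_add_schloeglDown hγ₁ hγ₂ hγ₃ hγ₄)
    schloeglDown_zero hup hdown
    (BirthDeath.summable_weight hup hdown zero_lt_one
      (tendsto_schloeglUp_div_schloeglDown_succ hγ₁ hγ₂ hγ₃ hγ₄))
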